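/- arXiv:1812.02544 — 5 statements merged into one kernel-verified Lean document; each statement's English description precedes it below -/
import Mathlib

section
/- For every k ∈ {1,…,n} one has D(λ_k) = φ_k · A′(λ_k); equivalently, since A′(λ_k) ≠ 0, the variables φ_k are recovered from the spectral data by φ_k = D(λ_k)/A′(λ_k). (This is the spinless case of the theorem that on the Calogero–Moser space attached to the cyclic quiver the conjugate variables φ_k are given by the rational function r(z) = D(z)/A′(z) evaluated at the eigenvalues λ_k.) -/
open Matrix BigOperators

noncomputable section

/-- The block matrix `L̃` with diagonal blocks `Λ = diag(λ₁,…,λₙ)` at positions `(h, h+1)`: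
its entry in row `(h,j)` and column `(i,k)` is `λⱼ` if `k = j` and `i = h + 1` in `ℤ/mℤ`,
and `0` otherwise. -/
def Ltilde (m n : ℕ) (lam : Fin n → ℂ) :
    Matrix (ZMod m × Fin n) (ZMod m × Fin n) ℂ :=
  Matrix.of fun p q => if q.2 = p.2 ∧ q.1 = p.1 + 1 then lam p.2 else 0

/-- `|g| = g₀ + g₁ + ⋯ + g_{m-1}`. -/
def gAbs (m : ℕ) (g : ZMod m → ℂ) : ℂ :=
  ∑ s ∈ Finset.range m, g (s : ZMod m)

/-- `cᵢ = Σ_{r=0}^{i} g_r − Σ_{s=0}^{m−1} ((m−s)/m)·g_s`, the index `i` read modulo `m`. -/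
def cConst (m : ℕ) (g : ZMod m → ℂ) (i : ZMod m) : ℂ :=
  (∑ r ∈ Finset.range (i.val + 1), g (r : ZMod m)) -
    ∑ s ∈ Finset.range m, (((m : ℂ) - (s : ℂ)) / (m : ℂ)) * g (s : ZMod m)

/-- The (spinless) matrix `Q̃`: its entry in row `(h,j)` and column `(i,k)` vanishes unless
`h = i + 1` in `ℤ/mℤ`, in which case it equals `φⱼ + cᵢ/λⱼ` if `k = j`, and
`−|g|·λⱼ^{m−i−1}·λₖ^{i}/(λⱼ^m − λₖ^m)` if `k ≠ j` (where `i` is taken as its representative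
in `{0,…,m−1}`). -/
def Qtilde (m n : ℕ) (g : ZMod m → ℂ) (lam phi : Fin n → ℂ) :
    Matrix (ZMod m × Fin n) (ZMod m × Fin n) ℂ :=
  Matrix.of fun p q =>
    if p.1 = q.1 + 1 then
      if q.2 = p.2 then phi p.2 + cConst m g q.1 / lam p.2
      else -(gAbs m g) * lam p.2 ^ (m - q.1.val - 1) * lam q.2 ^ q.1.val /
        (lam p.2 ^ m - lam q.2 ^ m)
    else 0

/-- `A(z) = det(z·1 − L̃)`. -/
def Afun (m n : ℕ) [NeZero m] (lam : Fin n → ℂ) (z : ℂ) : ℂ :=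
  (z • (1 : Matrix (ZMod m × Fin n) (ZMod m × Fin n) ℂ) - Ltilde m n lam).det

/-- `D(z) = tr(Q̃ · adj(z·1 − L̃))`. -/
def Dfun (m n : ℕ) [NeZero m] (g : ZMod m → ℂ) (lam phi : Fin n → ℂ) (z : ℂ) : ℂ :=
  Matrix.trace (Qtilde m n g lam phi *
    (z • (1 : Matrix (ZMod m × Fin n) (ZMod m × Fin n) ℂ) - Ltilde m n lam).adjugate)

/-- `C(z) = w̃ · Q̃ · adj(z·1 − L̃) · ṽ`, where `ṽ` has entry `1` at each index `(0,j)` and `0`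
elsewhere, and `w̃` has entry `|g|` at each index `(0,j)` and `0` elsewhere. -/
def Cfun (m n : ℕ) [NeZero m] (g : ZMod m → ℂ) (lam phi : Fin n → ℂ) (z : ℂ) : ℂ :=
  (fun p : ZMod m × Fin n => if p.1 = 0 then gAbs m g else 0) ⬝ᵥ
    ((Qtilde m n g lam phi *
        (z • (1 : Matrix (ZMod m × Fin n) (ZMod m × Fin n) ℂ) - Ltilde m n lam).adjugate) *ᵥ
      fun p : ZMod m × Fin n => if p.1 = 0 then (1 : ℂ) else 0)

/-!
`L̃` is block diagonal with one `m × m` block `λⱼ C` for each `j`, where `C` is the cyclic shift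
of `ℤ/mℤ`. Since `C ^ m = 1`, the geometric series `Σ zⁱ λ^(m-1-i) C^(m-1-i)` inverts
`z - λC` up to the factor `z ^ m - λ ^ m`, which is also its determinant. Hence
`A(z) = ∏ⱼ (z ^ m - λⱼ ^ m)`, and `adj(z - L̃)` is block diagonal with these geometric series,
the `j`-th one scaled by `∏_{t ≠ j} (z ^ m - λₜ ^ m)`. At `z = λₖ` only the `k`-th block
survives, and it is `λₖ^(m-1) ∏_{t ≠ k} (λₖ ^ m - λₜ ^ m)` times the all-ones matrix. So
`D(λₖ)` is this factor times the sum of the entries of the `k`-th diagonal block of `Q̃`, which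
is `m φₖ` because `Σᵢ cᵢ = 0`; and `A′(λₖ)` is the same factor times `m`.
-/

open Finset

theorem ZMod.sum_univ_eq_sum_range {M : Type*} [AddCommMonoid M] (m : ℕ) [NeZero m]
    (f : ZMod m → M) : ∑ i : ZMod m, f i = ∑ t ∈ range m, f t := by
  obtain ⟨N, rfl⟩ : ∃ N, m = N + 1 := Nat.exists_eq_succ_of_ne_zero (NeZero.ne m)
  rw [← Fin.sum_univ_eq_sum_range]
  exact Fintype.sum_congr _ _ fun i => congrArg f (ZMod.natCast_zmod_val i).symm

theorem sum_range_sum_range_succ {M : Type*} [AddCommMonoid M] (G : ℕ → M) (N : ℕ) :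
    ∑ t ∈ range N, ∑ r ∈ range (t + 1), G r = ∑ s ∈ range N, (N - s) • G s := by
  simp only [range_eq_Ico, ← sum_Ico_Ico_comm 0 N fun r _ => G r, sum_const, Nat.card_Ico]

theorem deriv_prod_pow_sub_pow {𝕜 : Type*} [NontriviallyNormedField 𝕜] {ι : Type*} [Fintype ι]
    [DecidableEq ι] (m : ℕ) (l : ι → 𝕜) (k : ι) :
    deriv (fun z => ∏ j, (z ^ m - l j ^ m)) (l k) =
      m * l k ^ (m - 1) * ∏ t ∈ univ.erase k, (l k ^ m - l t ^ m) := by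
  have split : (fun z => ∏ j, (z ^ m - l j ^ m)) =
      fun z => (z ^ m - l k ^ m) * ∏ t ∈ univ.erase k, (z ^ m - l t ^ m) :=
    funext fun z => (mul_prod_erase _ (fun j => z ^ m - l j ^ m) (mem_univ k)).symm
  have hrest : DifferentiableAt 𝕜 (fun z => ∏ t ∈ univ.erase k, (z ^ m - l t ^ m)) (l k) :=
    DifferentiableAt.fun_finsetProd fun t _ => (differentiableAt_pow m).sub_const _
  rw [split, deriv_fun_mul ((differentiableAt_pow m).sub_const _) hrest, deriv_sub_const,
    deriv_pow_field, sub_self, zero_mul, add_zero]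

/- Expand along column 0: only rows 0 and `N` contribute, and their minors are triangular with
diagonals `z` and `-l` respectively. -/
theorem det_eq_pow_sub_pow_of_cycle {R : Type*} [CommRing R] {N : ℕ} (z l : R)
    (M : Matrix (Fin (N + 1)) (Fin (N + 1)) R)
    (hM : ∀ a b, M a b = (if a = b then z else 0) - if b = a + 1 then l else 0) :
    M.det = z ^ (N + 1) - l ^ (N + 1) := by
  have minor_zero_apply (a b : Fin N) : M a.succ b.succ =
      (if a.val = b.val then z else 0) - if b.val = a.val + 1 then l else 0 := by
    simp only [hM, Fin.ext_iff, Fin.val_add_one, Fin.val_succ, Fin.val_last]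
    have := a.isLt; have := b.isLt
    split_ifs <;> first | rfl | contradiction | omega
  have minor_last_apply (a b : Fin N) : M a.castSucc b.succ =
      (if a.val = b.val + 1 then z else 0) - if b.val = a.val then l else 0 := by
    simp only [hM, Fin.ext_iff, Fin.val_add_one, Fin.val_succ, Fin.val_castSucc, Fin.val_last]
    have := a.isLt; have := b.isLt
    split_ifs <;> first | rfl | contradiction | omega
  have det_minor_zero : (M.submatrix Fin.succ Fin.succ).det = z ^ N := by
    rw [det_of_isUpperTriangular]
    · simp [minor_zero_apply]
    · intro a b (hba : b.val < a.val)
      rw [submatrix_apply, minor_zero_apply, if_neg (by omega), if_neg (by omega), sub_zero]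
  have det_minor_last : (M.submatrix Fin.castSucc Fin.succ).det = (-l) ^ N := by
    rw [det_of_isLowerTriangular]
    · simp [minor_last_apply]
    · intro a b (hab : a.val < b.val)
      rw [submatrix_apply, minor_last_apply, if_neg (by omega), if_neg (by omega), sub_zero]
  have column_zero_apply (i : Fin (N + 1)) :
      M i 0 = (if i = 0 then z else 0) - if i = Fin.last N then l else 0 := by
    have wraps : 0 = i + 1 ↔ i = Fin.last N := by
      rw [← Fin.last_add_one, add_left_inj, eq_comm]
    simp only [hM, wraps]
  simp only [det_succ_column_zero, column_zero_apply, mul_sub, sub_mul, mul_ite, ite_mul,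
    mul_zero, zero_mul, sum_sub_distrib, sum_ite_eq', mem_univ, if_true, Fin.succAbove_zero,
    Fin.succAbove_last, det_minor_zero, det_minor_last, Fin.val_zero, Fin.val_last]
  have sign_sq : (-1 : R) ^ N * (-1) ^ N = 1 := by rw [← mul_pow]; simp
  rw [neg_pow l]
  linear_combination (-l ^ (N + 1)) * sign_sq

def blockOnes {α ι : Type*} (R : Type*) [Zero R] [One R] [DecidableEq ι] (k : ι) :
    Matrix (α × ι) (α × ι) R :=
  of fun p q => if p.2 = k ∧ q.2 = k then 1 else 0

theorem trace_mul_blockOnes {R : Type*} [CommRing R] {α ι : Type*} [Fintype α] [Fintype ι]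
    [DecidableEq ι] (Q : Matrix (α × ι) (α × ι) R) (k : ι) :
    trace (Q * blockOnes R k) = ∑ h, ∑ i, Q (h, k) (i, k) := by
  simp [blockOnes, trace, mul_apply, Fintype.sum_prod_type, ite_and]

section CyclicShift

variable (R : Type*) [CommRing R] (m : ℕ)

def cyclicShift (a : ZMod m) : Matrix (ZMod m) (ZMod m) R :=
  of fun h i => if i = h + a then 1 else 0

theorem cyclicShift_zero : cyclicShift R m 0 = 1 := by
  ext h i
  simp [cyclicShift, one_apply, eq_comm]

variable [NeZero m]

theorem cyclicShift_mul (a b : ZMod m) :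
    cyclicShift R m a * cyclicShift R m b = cyclicShift R m (a + b) := by
  ext h i
  simp only [cyclicShift, mul_apply, of_apply, ite_mul, one_mul, zero_mul, sum_ite_eq', mem_univ,
    if_true, add_assoc]

theorem cyclicShift_one_pow (t : ℕ) : cyclicShift R m 1 ^ t = cyclicShift R m t := by
  induction t with
  | zero => simp [cyclicShift_zero]
  | succ t ih => rw [pow_succ, ih, cyclicShift_mul, Nat.cast_succ]

theorem sum_range_cyclicShift_one_pow :
    ∑ t ∈ range m, cyclicShift R m 1 ^ t = of fun _ _ => 1 := by
  ext h i
  simp only [cyclicShift_one_pow, Matrix.sum_apply]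
  simp only [cyclicShift, of_apply]
  rw [← ZMod.sum_univ_eq_sum_range m (fun a => if i = h + a then (1 : R) else 0)]
  simp [← sub_eq_iff_eq_add']

theorem det_smul_one_sub_smul_cyclicShift (z l : R) :
    (z • (1 : Matrix (ZMod m) (ZMod m) R) - l • cyclicShift R m 1).det = z ^ m - l ^ m := by
  obtain ⟨N, rfl⟩ : ∃ N, m = N + 1 := Nat.exists_eq_succ_of_ne_zero (NeZero.ne m)
  let e := ZMod.finEquiv (N + 1)
  rw [← det_reindex_self e.toEquiv.symm]
  refine det_eq_pow_sub_pow_of_cycle z l _ fun a b => ?_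
  have hshift : e a + 1 = e (a + 1) := by rw [map_add, map_one]
  simp only [reindex_apply, submatrix_apply, Equiv.symm_symm, Matrix.sub_apply,
    Matrix.smul_apply, one_apply, cyclicShift, of_apply, smul_eq_mul, mul_ite, mul_one, mul_zero,
    RingEquiv.toEquiv_eq_coe, RingEquiv.coe_toEquiv, hshift, e.injective.eq_iff]

def cyclicAdjugate (z l : R) : Matrix (ZMod m) (ZMod m) R :=
  ∑ i ∈ range m, (z ^ i * l ^ (m - 1 - i)) • cyclicShift R m 1 ^ (m - 1 - i)

theorem cyclicAdjugate_mul (z l : R) :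
    cyclicAdjugate R m z l * (z • 1 - l • cyclicShift R m 1) = (z ^ m - l ^ m) • 1 := by
  have hcomm : Commute (z • (1 : Matrix (ZMod m) (ZMod m) R)) (l • cyclicShift R m 1) :=
    ((Commute.one_left _).smul_left z).smul_right l
  have hgeom := hcomm.geom_sum₂_mul m
  simp only [smul_pow, one_pow, smul_mul_smul_comm, one_mul] at hgeom
  rw [cyclicAdjugate, hgeom, cyclicShift_one_pow, ZMod.natCast_self, cyclicShift_zero, sub_smul]

theorem cyclicAdjugate_self (l : R) :
    cyclicAdjugate R m l l = l ^ (m - 1) • of fun _ _ => 1 := by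
  have hm := Nat.pos_of_ne_zero (NeZero.ne m)
  rw [← sum_range_cyclicShift_one_pow, cyclicAdjugate, smul_sum,
    ← sum_range_reflect (fun t => l ^ (m - 1) • cyclicShift R m 1 ^ t)]
  refine sum_congr rfl fun i hi => ?_
  rw [← pow_add, Nat.add_sub_cancel' (by simp at hi; omega)]

end CyclicShift

section BlockCyclic

variable {R : Type*} [CommRing R] (m : ℕ) [NeZero m] {ι : Type*} [Fintype ι] [DecidableEq ι]

def blockCyclic (z : R) (l : ι → R) : Matrix (ZMod m × ι) (ZMod m × ι) R :=
  blockDiagonal fun j => z • 1 - l j • cyclicShift R m 1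

def blockCyclicAdjugate (z : R) (l : ι → R) : Matrix (ZMod m × ι) (ZMod m × ι) R :=
  blockDiagonal fun j => (∏ t ∈ univ.erase j, (z ^ m - l t ^ m)) • cyclicAdjugate R m z (l j)

theorem det_blockCyclic (z : R) (l : ι → R) :
    (blockCyclic m z l).det = ∏ j, (z ^ m - l j ^ m) := by
  simp only [blockCyclic, det_blockDiagonal, det_smul_one_sub_smul_cyclicShift]

theorem blockCyclicAdjugate_mul (z : R) (l : ι → R) :
    blockCyclicAdjugate m z l * blockCyclic m z l = (∏ j, (z ^ m - l j ^ m)) • 1 := by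
  simp only [blockCyclicAdjugate, blockCyclic, ← blockDiagonal_mul, smul_mul_assoc,
    cyclicAdjugate_mul, smul_smul, prod_erase_mul _ _ (mem_univ _)]
  rw [← blockDiagonal_one, ← blockDiagonal_smul]
  rfl

theorem map_blockCyclic {S : Type*} [CommRing S] (f : R →+* S) (z : R) (l : ι → R) :
    f.mapMatrix (blockCyclic m z l) = blockCyclic m (f z) (f ∘ l) := by
  ext ⟨h, j⟩ ⟨i, k⟩
  simp [blockCyclic, blockDiagonal_apply, cyclicShift, one_apply, apply_ite f]

theorem map_blockCyclicAdjugate {S : Type*} [CommRing S] (f : R →+* S) (z : R) (l : ι → R) :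
    f.mapMatrix (blockCyclicAdjugate m z l) = blockCyclicAdjugate m (f z) (f ∘ l) := by
  ext ⟨h, j⟩ ⟨i, k⟩
  simp only [blockCyclicAdjugate, cyclicAdjugate, cyclicShift_one_pow]
  simp [blockDiagonal_apply, cyclicShift, Matrix.sum_apply, apply_ite f]

/- Over `R[X]` the determinant is monic, hence regular, so the adjugate is the unique `B` with
`B * M = det M • 1`; then specialise `X ↦ z`. -/
open Polynomial in
theorem adjugate_blockCyclic (z : R) (l : ι → R) :
    (blockCyclic m z l).adjugate = blockCyclicAdjugate m z l := by
  have hdet : (blockCyclic m (X : R[X]) (C ∘ l)).det.Monic := by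
    simp only [det_blockCyclic, Function.comp_apply, ← C_pow]
    exact monic_prod_of_monic _ _ fun j _ => monic_X_pow_sub_C _ (NeZero.ne m)
  have hpoly : (blockCyclic m (X : R[X]) (C ∘ l)).adjugate = blockCyclicAdjugate m X (C ∘ l) := by
    refine ((isRegular_of_isLeftRegular_det hdet.isRegular.left).right ?_).symm
    simp only [blockCyclicAdjugate_mul, adjugate_mul, det_blockCyclic]
  have heval := congrArg (evalRingHom z).mapMatrix hpoly
  have eval_C_comp : eval z ∘ C ∘ l = l := funext fun _ => eval_C
  rwa [RingHom.map_adjugate, map_blockCyclic, map_blockCyclicAdjugate, coe_evalRingHom, eval_X,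
    eval_C_comp] at heval

theorem blockCyclicAdjugate_self (l : ι → R) (k : ι) :
    blockCyclicAdjugate m (l k) l =
      (l k ^ (m - 1) * ∏ t ∈ univ.erase k, (l k ^ m - l t ^ m)) • blockOnes R k := by
  ext ⟨h, j⟩ ⟨i, t⟩
  by_cases hjk : j = k
  · subst hjk
    by_cases hjt : j = t
    · subst hjt
      simp [blockCyclicAdjugate, blockOnes, cyclicAdjugate_self, mul_comm]
    · simp [blockCyclicAdjugate, blockOnes, blockDiagonal_apply_ne _ _ _ hjt, Ne.symm hjt]
  · have : ∏ s ∈ univ.erase j, (l k ^ m - l s ^ m) = 0 :=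
      prod_eq_zero (mem_erase.2 ⟨Ne.symm hjk, mem_univ k⟩) (sub_self _)
    simp [blockCyclicAdjugate, blockOnes, blockDiagonal_apply, this, hjk]

end BlockCyclic

theorem smul_one_sub_Ltilde (m n : ℕ) [NeZero m] (lam : Fin n → ℂ) (z : ℂ) :
    z • (1 : Matrix (ZMod m × Fin n) (ZMod m × Fin n) ℂ) - Ltilde m n lam =
      blockCyclic m z lam := by
  ext ⟨h, j⟩ ⟨i, t⟩
  by_cases hjt : j = t
  · subst hjt
    simp [Ltilde, blockCyclic, cyclicShift, one_apply]
  · simp [Ltilde, blockCyclic, blockDiagonal_apply_ne _ _ _ hjt, one_apply, hjt, Ne.symm hjt]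

theorem sum_cConst (m : ℕ) [NeZero m] (g : ZMod m → ℂ) : ∑ i : ZMod m, cConst m g i = 0 := by
  rw [ZMod.sum_univ_eq_sum_range]
  simp only [cConst, sum_sub_distrib, sum_const, card_range]
  rw [sum_congr rfl fun t ht => by rw [ZMod.val_cast_of_lt (mem_range.1 ht)],
    sum_range_sum_range_succ, nsmul_eq_mul, mul_sum, sub_eq_zero]
  refine sum_congr rfl fun s hs => ?_
  have hm : (m : ℂ) ≠ 0 := Nat.cast_ne_zero.2 (NeZero.ne m)
  rw [nsmul_eq_mul, Nat.cast_sub (mem_range.1 hs).le]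
  field_simp

theorem sum_Qtilde_diagBlock (m n : ℕ) [NeZero m] (g : ZMod m → ℂ) (lam phi : Fin n → ℂ)
    (k : Fin n) : ∑ h, ∑ i, Qtilde m n g lam phi (h, k) (i, k) = m * phi k := by
  rw [sum_comm]
  simp only [Qtilde, of_apply, if_true, sum_ite_eq', mem_univ, sum_add_distrib, sum_const,
    card_univ, ZMod.card, nsmul_eq_mul, ← sum_div, sum_cConst, zero_div, add_zero]

theorem spinless_phi_eq_D_div_A'_general (m n : ℕ) [NeZero m]
    (lam phi : Fin n → ℂ) (g : ZMod m → ℂ)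
    (hlam : ∀ j, lam j ≠ 0)
    (hsep : ∀ j k : Fin n, j ≠ k → lam j ^ m ≠ lam k ^ m) (k : Fin n) :
    deriv (Afun m n lam) (lam k) ≠ 0 ∧
    Dfun m n g lam phi (lam k) = phi k * deriv (Afun m n lam) (lam k) ∧
    phi k = Dfun m n g lam phi (lam k) / deriv (Afun m n lam) (lam k) := by
  have hA : Afun m n lam = fun z => ∏ j, (z ^ m - lam j ^ m) :=
    funext fun z => by rw [Afun, smul_one_sub_Ltilde, det_blockCyclic]
  have hA' : deriv (Afun m n lam) (lam k) =
      m * lam k ^ (m - 1) * ∏ t ∈ univ.erase k, (lam k ^ m - lam t ^ m) := by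
    rw [hA, deriv_prod_pow_sub_pow]
  have hD : Dfun m n g lam phi (lam k) = phi k * deriv (Afun m n lam) (lam k) := by
    rw [Dfun, smul_one_sub_Ltilde, adjugate_blockCyclic, blockCyclicAdjugate_self, mul_smul_comm,
      trace_smul, trace_mul_blockOnes, sum_Qtilde_diagBlock, hA', smul_eq_mul]
    ring
  have hA'_ne : deriv (Afun m n lam) (lam k) ≠ 0 := by
    rw [hA']
    refine mul_ne_zero (mul_ne_zero (Nat.cast_ne_zero.2 (NeZero.ne m)) (pow_ne_zero _ (hlam k)))
      (prod_ne_zero_iff.2 fun t ht => sub_ne_zero.2 (hsep k t (ne_of_mem_erase ht).symm))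
  exact ⟨hA'_ne, hD, by rw [hD, mul_div_cancel_right₀ _ hA'_ne]⟩

/-- Spinless case: for every `k`, `D(λₖ) = φₖ · A′(λₖ)`; equivalently, since
`A′(λₖ) ≠ 0`, the conjugate variables are recovered as `φₖ = D(λₖ)/A′(λₖ)`. -/
theorem spinless_phi_eq_D_div_A' (m n : ℕ) [NeZero m] (hn : 0 < n)
    (lam phi : Fin n → ℂ) (g : ZMod m → ℂ)
    (hlam : ∀ j, lam j ≠ 0)
    (hsep : ∀ j k : Fin n, j ≠ k → lam j ^ m ≠ lam k ^ m) (k : Fin n) :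
    deriv (Afun m n lam) (lam k) ≠ 0 ∧
    Dfun m n g lam phi (lam k) = phi k * deriv (Afun m n lam) (lam k) ∧
    phi k = Dfun m n g lam phi (lam k) / deriv (Afun m n lam) (lam k) :=
  spinless_phi_eq_D_div_A'_general m n lam phi g hlam hsep k
end
end

section
/- For every z ∈ ℂ, the characteristic polynomial of L̃ satisfies det(z·1 − L̃) = ∏_{j=1}^{n} (z^m − λ_j^m). -/
/-!
`z • 1 - L̃` is block diagonal, its `j`-th block being `z • 1 - λⱼ • P` with `P` the permutation
matrix of the shift `h ↦ h + 1` of `ZMod m`. For `m ≥ 2` this shift is a cycle without fixed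
points, so in the Leibniz expansion of `det (z • 1 - c • P)` the only permutations with nonzero
terms are the identity and the inverse shift (a permutation sending every point either to itself
or one step along a full cycle is one of the two). They contribute `z ^ m` and, an `m`-cycle
having sign `-(-1) ^ m`, `-(-1) ^ m • (-c) ^ m = -c ^ m`.
-/

open Matrix BigOperators

noncomputable section

open Equiv Equiv.Perm

namespace Equiv.Perm

variable {ι : Type*} [Finite ι]

theorem IsCycle.eq_one_or_eq_of_forall_apply_eq_or_eq {σ τ : Perm ι} (hσ : σ.IsCycle)
    (hfix : ∀ i, σ i ≠ i) (hτ : ∀ i, τ i = i ∨ τ i = σ i) : τ = 1 ∨ τ = σ := by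
  by_contra! hne
  obtain ⟨x, hx⟩ : ∃ x, τ x = σ x := by
    by_contra! h
    exact hne.1 (ext fun i => (hτ i).resolve_right (h i))
  obtain ⟨y, hy⟩ : ∃ y, τ y ≠ σ y := by
    by_contra! h
    exact hne.2 (ext h)
  -- `τ` cannot fix `σ i` once it moves `i` to `σ i`, by injectivity
  have hstep : ∀ i, τ i = σ i → τ (σ i) = σ (σ i) := fun i hi =>
    (hτ (σ i)).resolve_left fun h => hfix i (τ.injective (h.trans hi.symm))
  obtain ⟨k, rfl⟩ := hσ.exists_pow_eq (hfix x) (hfix y)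
  refine hy (Nat.rec hx (fun k ih => ?_) k)
  simpa only [pow_succ', Perm.mul_apply] using hstep _ ih

end Equiv.Perm

namespace Matrix

variable {ι R : Type*} [Fintype ι] [DecidableEq ι] [CommRing R]

theorem det_smul_one_sub_smul_permMatrix_of_isCycle {σ : Perm ι} (hσ : σ.IsCycle)
    (hfix : ∀ i, σ i ≠ i) (z c : R) :
    det (z • 1 - c • σ.permMatrix R) = z ^ Fintype.card ι - c ^ Fintype.card ι := by
  set M := z • 1 - c • σ.permMatrix R
  have hM : ∀ i j, M i j = (if i = j then z else 0) - if σ i = j then c else 0 := by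
    intro i j
    simp [M, one_apply]
  have hsign : sign σ = -(-1) ^ Fintype.card ι := by
    rw [hσ.sign, Finset.eq_univ_of_forall fun i => mem_support.2 (hfix i), Finset.card_univ]
  have hfix_inv : ∀ i, σ⁻¹ i ≠ i := fun i h => hfix i (inv_eq_iff_eq.1 h).symm
  have hne : (1 : Perm ι) ≠ σ⁻¹ := fun h => hσ.ne_one (inv_eq_one.1 h.symm)
  rw [det_apply, Fintype.sum_eq_add 1 σ⁻¹ hne]
  · have hdiag : ∀ i, M i i = z := fun i => by simp [hM, hfix i]
    have hshift : ∀ i, M (σ⁻¹ i) i = -c := fun i => by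
      simp [hM, symm_apply_eq, Ne.symm (hfix i)]
    simp only [Perm.one_apply, hdiag, hshift, Finset.prod_const, Finset.card_univ, sign_inv,
      Perm.sign_one, hsign, one_smul, Units.smul_def, zsmul_eq_mul, neg_pow c]
    push_cast
    rw [neg_mul, ← mul_assoc, ← mul_pow, neg_one_mul, neg_neg, one_pow, one_mul, ← sub_eq_add_neg]
  · rintro τ ⟨hτ1, hτσ⟩
    obtain ⟨i, hi⟩ : ∃ i, M (τ i) i = 0 := by
      by_contra! h
      refine (hσ.inv.eq_one_or_eq_of_forall_apply_eq_or_eq hfix_inv fun i => ?_).elim hτ1 hτσ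
      by_contra! hi
      have hστ : σ (τ i) ≠ i := fun h => hi.2 (eq_inv_iff_eq.2 h)
      exact h i (by simp [hM, hi.1, hστ])
    exact smul_eq_zero_of_right _ (Finset.prod_eq_zero (Finset.mem_univ i) hi)

end Matrix

namespace ZMod

variable {m : ℕ}

theorem addRight_one_apply_ne [Fact (1 < m)] (x : ZMod m) : Equiv.addRight (1 : ZMod m) x ≠ x := by
  simp

theorem isCycle_addRight_one [Fact (1 < m)] : (Equiv.addRight (1 : ZMod m)).IsCycle := by
  refine ⟨0, addRight_one_apply_ne 0, fun y _ => ⟨y.val, ?_⟩⟩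
  simp

theorem det_smul_one_sub_smul_permMatrix_addRight_one [NeZero m] {R : Type*} [CommRing R] (z c : R) :
    det (z • 1 - c • (Equiv.addRight (1 : ZMod m)).permMatrix R) = z ^ m - c ^ m := by
  obtain rfl | hm := (NeZero.one_le (n := m)).eq_or_lt
  · rw [Subsingleton.elim (Equiv.addRight (1 : ZMod 1)) 1, permMatrix_one, ← sub_smul, det_smul, det_one]
    simp
  · have : Fact (1 < m) := ⟨hm⟩
    rw [det_smul_one_sub_smul_permMatrix_of_isCycle isCycle_addRight_one addRight_one_apply_ne, ZMod.card]

end ZMod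

theorem Ltilde_eq_blockDiagonal (m n : ℕ) (lam : Fin n → ℂ) :
    Ltilde m n lam = blockDiagonal fun j => lam j • (Equiv.addRight (1 : ZMod m)).permMatrix ℂ := by
  ext ⟨h, j⟩ ⟨i, k⟩
  simp [Ltilde, blockDiagonal_apply, eq_comm, ite_and]

theorem charpoly_Ltilde_general (m n : ℕ) [NeZero m] (lam : Fin n → ℂ) (z : ℂ) :
    (z • (1 : Matrix (ZMod m × Fin n) (ZMod m × Fin n) ℂ) - Ltilde m n lam).det =
      ∏ j : Fin n, (z ^ m - lam j ^ m) := by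
  rw [Ltilde_eq_blockDiagonal, ← blockDiagonal_one, ← blockDiagonal_smul, ← blockDiagonal_sub,
    det_blockDiagonal]
  exact Finset.prod_congr rfl fun j _ => ZMod.det_smul_one_sub_smul_permMatrix_addRight_one z (lam j)

/-- The characteristic polynomial of `L̃` satisfies
`det(z·1 − L̃) = ∏_{j=1}^{n} (z^m − λⱼ^m)`. -/
theorem charpoly_Ltilde (m n : ℕ) [NeZero m] (hn : 0 < n) (lam : Fin n → ℂ) (z : ℂ) :
    (z • (1 : Matrix (ZMod m × Fin n) (ZMod m × Fin n) ℂ) - Ltilde m n lam).det =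
      ∏ j : Fin n, (z ^ m - lam j ^ m) :=
  charpoly_Ltilde_general m n lam z
end
end

section
/- Let z ∈ ℂ satisfy z^m ≠ λ_j^m for every j ∈ {1,…,n}. Then z·1 − L̃ is invertible, and its inverse is the matrix whose entry in row (h,j) and column (i,k) equals 0 if k ≠ j, and equals z^{a}·λ_j^{b}/(z^m − λ_j^m) if k = j, where b ∈ {0,…,m−1} is the residue of i−h modulo m and a ∈ {0,…,m−1} is the residue of m−(i−h+1) modulo m. -/
open Matrix BigOperators

noncomputable section

/-- If `x ≠ 0` in `ZMod m`, then `(x-1).val + 1 = x.val`. -/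
lemma zmod_val_sub_one {m : ℕ} [NeZero m] (x : ZMod m) (hx : x ≠ 0) :
    (x - 1).val + 1 = x.val := by
  have h1 : 0 < x.val := ZMod.val_pos.mpr hx
  have hlt : x.val - 1 < m := lt_of_le_of_lt (Nat.sub_le _ _) (ZMod.val_lt x)
  have hxx : ((x.val : ℕ) : ZMod m) = x := by simp
  have hcast : x - 1 = ((x.val - 1 : ℕ) : ZMod m) := by
    rw [Nat.cast_sub h1, Nat.cast_one, hxx]
  rw [hcast, ZMod.val_cast_of_lt hlt]
  omega

/-- `(-1 : ZMod m).val + 1 = m`. -/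
lemma zmod_neg_one_val_succ (m : ℕ) [NeZero m] : (-1 : ZMod m).val + 1 = m := by
  rcases eq_or_lt_of_le (Nat.one_le_iff_ne_zero.mpr (NeZero.ne m)) with h | h
  · subst h
    decide
  · have h0 : (1 : ZMod m).val = 1 := ZMod.val_one_eq_one_mod m ▸ Nat.mod_eq_of_lt h
    have h1 : (1 : ZMod m) ≠ 0 := by
      intro hc
      have := congrArg ZMod.val hc
      rw [h0, ZMod.val_zero] at this
      omega
    rw [ZMod.neg_val, if_neg h1, h0]
    omega

/-- If `z^m ≠ λⱼ^m` for every `j`, then `z·1 − L̃` is invertible and its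
inverse has entry in row `(h,j)` and column `(i,k)` equal to `0` if `k ≠ j` and to
`z^a · λⱼ^b / (z^m − λⱼ^m)` if `k = j`, where `b ∈ {0,…,m−1}` is the residue of `i − h`
modulo `m` and `a ∈ {0,…,m−1}` is the residue of `m − (i − h + 1)` modulo `m`. -/
theorem inverse_of_z_sub_Ltilde (m n : ℕ) [NeZero m] (hn : 0 < n) (lam : Fin n → ℂ)
    (z : ℂ) (hz : ∀ j, z ^ m ≠ lam j ^ m) :
    IsUnit (z • (1 : Matrix (ZMod m × Fin n) (ZMod m × Fin n) ℂ) - Ltilde m n lam) ∧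
    (z • (1 : Matrix (ZMod m × Fin n) (ZMod m × Fin n) ℂ) - Ltilde m n lam)⁻¹ =
      Matrix.of fun p q : ZMod m × Fin n =>
        if q.2 = p.2 then
          z ^ (-(q.1 - p.1 + 1)).val * lam p.2 ^ (q.1 - p.1).val / (z ^ m - lam p.2 ^ m)
        else 0 := by
  set B : Matrix (ZMod m × Fin n) (ZMod m × Fin n) ℂ :=
    Matrix.of fun p q : ZMod m × Fin n =>
      if q.2 = p.2 then
        z ^ (-(q.1 - p.1 + 1)).val * lam p.2 ^ (q.1 - p.1).val / (z ^ m - lam p.2 ^ m)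
      else 0 with hB
  have hDp : ∀ j, z ^ m - lam j ^ m ≠ 0 := fun j => sub_ne_zero.mpr (hz j)
  -- the key right-inverse identity
  have hLB : ∀ p q, (Ltilde m n lam * B) p q = lam p.2 * B (p.1 + 1, p.2) q := by
    intro p q
    rw [Matrix.mul_apply, Finset.sum_eq_single ((p.1 + 1, p.2) : ZMod m × Fin n)]
    · simp [Ltilde]
    · intro r _ hr
      have hcond : ¬(r.2 = p.2 ∧ r.1 = p.1 + 1) := by
        rintro ⟨h1, h2⟩; exact hr (Prod.ext h2 h1)
      simp [Ltilde, hcond]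
    · intro h; exact absurd (Finset.mem_univ _) h
  have key : (z • (1 : Matrix (ZMod m × Fin n) (ZMod m × Fin n) ℂ) - Ltilde m n lam) * B
      = 1 := by
    rw [Matrix.sub_mul, Matrix.smul_mul, Matrix.one_mul]
    ext p q
    rw [Matrix.sub_apply, Matrix.smul_apply, hLB, smul_eq_mul, Matrix.one_apply]
    by_cases hq2 : q.2 = p.2
    · -- same block
      simp only [hB, Matrix.of_apply, if_pos hq2]
      have hsub : q.1 - (p.1 + 1) = (q.1 - p.1) - 1 := by ring
      rw [hsub]
      obtain ⟨d, hd⟩ : ∃ d, q.1 - p.1 = d := ⟨_, rfl⟩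
      rw [hd]
      by_cases hd0 : d = 0
      · -- diagonal entry
        subst hd0
        have hpq : p = q := Prod.ext ((sub_eq_zero.mp hd).symm) hq2.symm
        rw [if_pos hpq]
        have e1 : (-(0 + 1) : ZMod m) = -1 := by ring
        have e2 : ((0 : ZMod m) - 1) = -1 := by ring
        have e3 : (-(0 - 1 + 1) : ZMod m) = 0 := by ring
        rw [e3, e1, e2, ZMod.val_zero, pow_zero, pow_zero, mul_one, one_mul,
          mul_div_assoc', mul_div_assoc', div_sub_div_same, ← pow_succ', ← pow_succ',
          zmod_neg_one_val_succ m]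
        exact div_self (hDp p.2)
      · -- off-diagonal entry within the block
        have hpq : ¬ p = q := by
          intro hc
          exact hd0 (by rw [← hd, hc, sub_self])
        rw [if_neg hpq]
        have e1 : (-(d - 1 + 1) : ZMod m) = -d := by ring
        have e2 : (-(d + 1) : ZMod m) = -d - 1 := by ring
        rw [e1, e2]
        have hb : (d - 1).val + 1 = d.val := zmod_val_sub_one d hd0
        have hnd : (-d : ZMod m) ≠ 0 := by simpa using hd0
        have ha : (-d - 1).val + 1 = (-d).val := zmod_val_sub_one (-d) hnd
        rw [mul_div_assoc', mul_div_assoc', div_sub_div_same, div_eq_zero_iff]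
        left
        rw [← ha, ← hb]
        ring
    · -- different blocks: everything vanishes
      have hpq : ¬ p = q := fun hc => hq2 (by rw [hc])
      rw [if_neg hpq]
      simp [hB, hq2]
  have hinv : Invertible (z • (1 : Matrix (ZMod m × Fin n) (ZMod m × Fin n) ℂ)
      - Ltilde m n lam) := invertibleOfRightInverse _ _ key
  exact ⟨isUnit_of_invertible _, Matrix.inv_eq_right_inv key⟩
end
end

section
/- Assume m ≥ 2 and let z ∈ ℂ satisfy z^m ≠ λ_j^m for every j. Then for every i ∈ ℤ/mℤ and all j, k ∈ {1,…,n}, the entry of the product Q̃·adj(z·1 − L̃) in row (i,j) and column (i,k) equals Q̃_{(i,j),(i−1,k)} · A(z) · z^{m−2} · λ_k/(z^m − λ_k^m), where Q̃_{(i,j),(i−1,k)} denotes the entry of Q̃ in row (i,j) and column (i−1,k). -/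
open Matrix BigOperators

noncomputable section

/-!
Since `L̃` shifts the block index cyclically by one and is diagonal inside each block,
`L̃ ^ m` is the block diagonal matrix `diag(λⱼ ^ m)`, so
`(z - L̃)⁻¹ = (z ^ m - L̃ ^ m)⁻¹ · ∑_{d < m} z ^ (m - 1 - d) L̃ ^ d`: the entry in row `(h, j)` and
column `(i, j)` is `z ^ (m - 1 - d) λⱼ ^ d / (z ^ m - λⱼ ^ m)` with `d = i - h` read in
`{0, …, m - 1}`, and the adjugate is `A(z)` times this matrix. As `Q̃` lives only on the blocks
`(i, i - 1)`, the diagonal block `(i, i)` of `Q̃ · adj(z - L̃)` sees only the offset `d = 1`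
of the resolvent, which contributes `z ^ (m - 2) λₖ`.
-/

namespace ZMod

theorem val_neg_one_of_neZero (m : ℕ) [NeZero m] : (-1 : ZMod m).val = m - 1 := by
  obtain ⟨k, rfl⟩ := Nat.exists_eq_add_one_of_ne_zero (NeZero.ne m)
  exact val_neg_one k

theorem val_sub_one_of_ne_zero {m : ℕ} [NeZero m] {d : ZMod m} (hd : d ≠ 0) :
    (d - 1).val = d.val - 1 := by
  have hm : m ≠ 1 := by
    rintro rfl
    exact hd (Subsingleton.elim d 0)
  have hpos : 1 ≤ d.val := Nat.one_le_iff_ne_zero.2 ((val_ne_zero d).2 hd)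
  rw [val_sub (by rwa [val_one'' hm]), val_one'' hm]

end ZMod

theorem Matrix.adjugate_eq_det_smul_of_mul_eq_one {ι R : Type*} [Fintype ι] [DecidableEq ι]
    [CommRing R] {A B : Matrix ι ι R} (h : A * B = 1) : A.adjugate = A.det • B := by
  calc A.adjugate = A.adjugate * (A * B) := by rw [h, Matrix.mul_one]
    _ = A.det • B := by rw [← Matrix.mul_assoc, adjugate_mul, Matrix.smul_mul, Matrix.one_mul]

section CyclicTerm

variable {R : Type*} [CommRing R] (m : ℕ)

def cyclicTerm (z a : R) (d : ZMod m) : R :=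
  z ^ (m - 1 - d.val) * a ^ d.val

theorem mul_cyclicTerm_sub_mul_cyclicTerm_sub_one [NeZero m] (z a : R) (d : ZMod m) :
    z * cyclicTerm m z a d - a * cyclicTerm m z a (d - 1) =
      if d = 0 then z ^ m - a ^ m else 0 := by
  unfold cyclicTerm
  split_ifs with hd
  · subst hd
    rw [zero_sub, ZMod.val_neg_one_of_neZero, ZMod.val_zero]
    obtain ⟨k, rfl⟩ := Nat.exists_eq_add_one_of_ne_zero (NeZero.ne m)
    simp only [Nat.add_sub_cancel, Nat.sub_zero, Nat.sub_self, pow_zero]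
    ring
  · have hpos : 0 < d.val := Nat.pos_of_ne_zero ((ZMod.val_ne_zero d).2 hd)
    have hlt := d.val_lt
    rw [ZMod.val_sub_one_of_ne_zero hd, ← mul_assoc, ← pow_succ', mul_left_comm, ← pow_succ',
      Nat.sub_add_cancel hpos, show m - 1 - (d.val - 1) = m - 1 - d.val + 1 by omega, sub_self]

theorem cyclicTerm_one (hm : 2 ≤ m) (z a : R) : cyclicTerm m z a 1 = z ^ (m - 2) * a := by
  have : Fact (1 < m) := ⟨hm⟩
  rw [cyclicTerm, ZMod.val_one, pow_one, Nat.sub_sub]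

end CyclicTerm

def LtildeResolvent (m n : ℕ) (lam : Fin n → ℂ) (z : ℂ) :
    Matrix (ZMod m × Fin n) (ZMod m × Fin n) ℂ :=
  Matrix.of fun p q =>
    if q.2 = p.2 then cyclicTerm m z (lam p.2) (q.1 - p.1) / (z ^ m - lam p.2 ^ m) else 0

section Resolvent

variable {m n : ℕ} [NeZero m] {lam : Fin n → ℂ}

theorem Ltilde_mul_apply (N : Matrix (ZMod m × Fin n) (ZMod m × Fin n) ℂ)
    (p q : ZMod m × Fin n) : (Ltilde m n lam * N) p q = lam p.2 * N (p.1 + 1, p.2) q := by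
  rw [Matrix.mul_apply, Finset.sum_eq_single (p.1 + 1, p.2)]
  · simp [Ltilde]
  · rintro ⟨a, l⟩ - hne
    have : ¬(l = p.2 ∧ a = p.1 + 1) := by
      rintro ⟨rfl, rfl⟩
      exact hne rfl
    simp [Ltilde, this]
  · simp

theorem sub_Ltilde_mul_LtildeResolvent {z : ℂ} (hz : ∀ j, z ^ m ≠ lam j ^ m) :
    (z • (1 : Matrix (ZMod m × Fin n) (ZMod m × Fin n) ℂ) - Ltilde m n lam) *
      LtildeResolvent m n lam z = 1 := by
  ext ⟨h, j⟩ ⟨i, k⟩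
  rw [Matrix.sub_mul, Matrix.smul_mul, Matrix.one_mul, Matrix.sub_apply, Matrix.smul_apply,
    Ltilde_mul_apply, Matrix.one_apply]
  by_cases hkj : k = j
  · subst hkj
    have hD : z ^ m - lam k ^ m ≠ 0 := sub_ne_zero.mpr (hz k)
    have hshift : i - (h + 1) = (i - h) - 1 := by ring
    simp only [LtildeResolvent, Matrix.of_apply, if_true, smul_eq_mul, hshift]
    rw [mul_div_assoc', mul_div_assoc', div_sub_div_same,
      mul_cyclicTerm_sub_mul_cyclicTerm_sub_one]
    by_cases hhi : h = i
    · simp [hhi, hD]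
    · simp [sub_eq_zero, Ne.symm hhi, hhi]
  · simp [LtildeResolvent, hkj, Ne.symm hkj]

theorem adjugate_sub_Ltilde {z : ℂ} (hz : ∀ j, z ^ m ≠ lam j ^ m) :
    (z • (1 : Matrix (ZMod m × Fin n) (ZMod m × Fin n) ℂ) - Ltilde m n lam).adjugate =
      Afun m n lam z • LtildeResolvent m n lam z :=
  Matrix.adjugate_eq_det_smul_of_mul_eq_one (sub_Ltilde_mul_LtildeResolvent hz)

theorem mul_LtildeResolvent_apply_diag (z : ℂ) (Q : Matrix (ZMod m × Fin n) (ZMod m × Fin n) ℂ)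
    (hQ : ∀ p q, p.1 ≠ q.1 + 1 → Q p q = 0) (i : ZMod m) (j k : Fin n) :
    (Q * LtildeResolvent m n lam z) (i, j) (i, k) =
      Q (i, j) (i - 1, k) * LtildeResolvent m n lam z (i - 1, k) (i, k) := by
  rw [Matrix.mul_apply, Finset.sum_eq_single (i - 1, k)]
  · rintro ⟨a, l⟩ - hne
    by_cases hl : k = l
    · subst hl
      rw [hQ, zero_mul]
      rintro rfl
      exact hne (by simp)
    · simp [LtildeResolvent, hl]
  · simp

end Resolvent

theorem Qtilde_apply_eq_zero (m n : ℕ) (g : ZMod m → ℂ) (lam phi : Fin n → ℂ)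
    (p q : ZMod m × Fin n) (h : p.1 ≠ q.1 + 1) : Qtilde m n g lam phi p q = 0 := by
  simp [Qtilde, h]

theorem diag_blocks_Q_adj_general (m n : ℕ) [NeZero m] (hm : 2 ≤ m)
    (lam phi : Fin n → ℂ) (g : ZMod m → ℂ)
    (z : ℂ) (hz : ∀ j, z ^ m ≠ lam j ^ m) :
    ∀ (i : ZMod m) (j k : Fin n),
      (Qtilde m n g lam phi *
          (z • (1 : Matrix (ZMod m × Fin n) (ZMod m × Fin n) ℂ) -
            Ltilde m n lam).adjugate) (i, j) (i, k) =
        Qtilde m n g lam phi (i, j) (i - 1, k) * Afun m n lam z * z ^ (m - 2) * lam k /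
          (z ^ m - lam k ^ m) := by
  intro i j k
  rw [adjugate_sub_Ltilde hz, Matrix.mul_smul, Matrix.smul_apply,
    mul_LtildeResolvent_apply_diag z _ (Qtilde_apply_eq_zero m n g lam phi)]
  simp only [LtildeResolvent, Matrix.of_apply, if_true, sub_sub_cancel, cyclicTerm_one m hm,
    smul_eq_mul]
  ring

/-- For `m ≥ 2` and `z` with `z^m ≠ λⱼ^m` for all `j`, the diagonal blocks of
`Q̃ · adj(z·1 − L̃)` are given by
`(Q̃ · adj(z·1 − L̃))_{(i,j),(i,k)} = Q̃_{(i,j),(i−1,k)} · A(z) · z^{m−2} · λₖ/(z^m − λₖ^m)`. -/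
theorem diag_blocks_Q_adj (m n : ℕ) [NeZero m] (hm : 2 ≤ m) (hn : 0 < n)
    (lam phi : Fin n → ℂ) (g : ZMod m → ℂ)
    (hlam : ∀ j, lam j ≠ 0)
    (hsep : ∀ j k : Fin n, j ≠ k → lam j ^ m ≠ lam k ^ m)
    (z : ℂ) (hz : ∀ j, z ^ m ≠ lam j ^ m) :
    ∀ (i : ZMod m) (j k : Fin n),
      (Qtilde m n g lam phi *
          (z • (1 : Matrix (ZMod m × Fin n) (ZMod m × Fin n) ℂ) -
            Ltilde m n lam).adjugate) (i, j) (i, k) =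
        Qtilde m n g lam phi (i, j) (i - 1, k) * Afun m n lam z * z ^ (m - 2) * lam k /
          (z ^ m - lam k ^ m) :=
  diag_blocks_Q_adj_general m n hm lam phi g z hz
end
end

section
/- Fix distinct indices j, k ∈ {1,…,n}. The one-variable function F(x) = c_{m−1}/(m·λ_k) − (|g|/(m·λ_k))·( λ_k^m/(x^m − λ_k^m) + Σ_{ℓ≠j,k} λ_k^m/(λ_ℓ^m − λ_k^m) ) (i.e. f_k regarded as a function of λ_j, all other λ's fixed) is differentiable at x = λ_j with derivative F′(λ_j) = |g|·(λ_j·λ_k)^{m−1}/(λ_j^m − λ_k^m)^2. Since this expression is symmetric under interchanging j and k, the partial derivatives satisfy ∂f_k/∂λ_j = ∂f_j/∂λ_k. -/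
/-! Only the term `λ_k^m / (λ_j^m − λ_k^m)` of `f_k` depends on `λ_j`. Its derivative carries the
factor `m·λ_j^{m−1}·λ_k^m`, which cancels the prefactor `1/(m·λ_k)` down to
`|g|·(λ_j·λ_k)^{m−1}/(λ_j^m − λ_k^m)²`, an expression symmetric in `j` and `k`. -/

open BigOperators

noncomputable section

section

variable {𝕜 : Type*} [NontriviallyNormedField 𝕜] [CharZero 𝕜] {m : ℕ}

/-- `f_k` as a function of `x = λ_j`, with `B = λ_k` and `S` the sum over `ℓ ≠ j, k`. -/
theorem hasDerivAt_const_sub_mul_div_pow_sub (C G B S x : 𝕜) (hB : B ≠ 0)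
    (hx : x ^ m ≠ B ^ m) :
    HasDerivAt (fun y => C / (m * B) - G / (m * B) * (B ^ m / (y ^ m - B ^ m) + S))
      (G * (x * B) ^ (m - 1) / (x ^ m - B ^ m) ^ 2) x := by
  obtain ⟨n, rfl⟩ : ∃ n, m = n + 1 :=
    Nat.exists_eq_succ_of_ne_zero (by rintro rfl; exact hx (by simp))
  have hden : x ^ (n + 1) - B ^ (n + 1) ≠ 0 := sub_ne_zero.2 hx
  have hfrac := (hasDerivAt_const x (B ^ (n + 1))).div ((hasDerivAt_pow (n + 1) x).sub_const _) hden
  refine ((hfrac.add_const S).const_mul _).const_sub _ |>.congr_deriv ?_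
  simp only [Nat.add_sub_cancel]
  field_simp
  ring

theorem deriv_const_sub_mul_div_pow_sub_symm (C C' G S S' A B : 𝕜) (hA : A ≠ 0) (hB : B ≠ 0)
    (hAB : A ^ m ≠ B ^ m) :
    deriv (fun y => C / (m * B) - G / (m * B) * (B ^ m / (y ^ m - B ^ m) + S)) A =
      deriv (fun y => C' / (m * A) - G / (m * A) * (A ^ m / (y ^ m - A ^ m) + S')) B := by
  rw [(hasDerivAt_const_sub_mul_div_pow_sub C G B S A hB hAB).deriv,
    (hasDerivAt_const_sub_mul_div_pow_sub C' G A S' B hA hAB.symm).deriv, mul_comm B,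
    sub_sq_comm]

end

theorem spinless_f_symmetry_general (m n : ℕ)
    (lam : Fin n → ℂ) (g : ZMod m → ℂ)
    (hlam : ∀ j, lam j ≠ 0)
    (hsep : ∀ a b : Fin n, a ≠ b → lam a ^ m ≠ lam b ^ m)
    (j k : Fin n) (hjk : j ≠ k) :
    HasDerivAt (fun x : ℂ =>
        cConst m g ((m : ZMod m) - 1) / ((m : ℂ) * lam k) -
          gAbs m g / ((m : ℂ) * lam k) *
            (lam k ^ m / (x ^ m - lam k ^ m) +
              ∑ l ∈ (Finset.univ.erase k).erase j, lam k ^ m / (lam l ^ m - lam k ^ m)))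
      (gAbs m g * (lam j * lam k) ^ (m - 1) / (lam j ^ m - lam k ^ m) ^ 2) (lam j) ∧
    deriv (fun x : ℂ =>
        cConst m g ((m : ZMod m) - 1) / ((m : ℂ) * lam k) -
          gAbs m g / ((m : ℂ) * lam k) *
            (lam k ^ m / (x ^ m - lam k ^ m) +
              ∑ l ∈ (Finset.univ.erase k).erase j, lam k ^ m / (lam l ^ m - lam k ^ m)))
      (lam j) =
    deriv (fun x : ℂ =>
        cConst m g ((m : ZMod m) - 1) / ((m : ℂ) * lam j) -
          gAbs m g / ((m : ℂ) * lam j) *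
            (lam j ^ m / (x ^ m - lam j ^ m) +
              ∑ l ∈ (Finset.univ.erase j).erase k, lam j ^ m / (lam l ^ m - lam j ^ m)))
      (lam k) :=
  ⟨hasDerivAt_const_sub_mul_div_pow_sub _ _ _ _ _ (hlam k) (hsep j k hjk),
    deriv_const_sub_mul_div_pow_sub_symm _ _ _ _ _ _ _ (hlam j) (hlam k) (hsep j k hjk)⟩

/-- For distinct `j, k`, the function
`F(x) = c_{m−1}/(m·λₖ) − (|g|/(m·λₖ))·(λₖ^m/(x^m − λₖ^m) + Σ_{ℓ≠j,k} λₖ^m/(λ_ℓ^m − λₖ^m))`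
(that is, `fₖ` regarded as a function of `λⱼ`) has derivative
`|g|·(λⱼ·λₖ)^{m−1}/(λⱼ^m − λₖ^m)²` at `x = λⱼ`; this expression being symmetric in `j` and
`k`, the partial derivatives satisfy `∂fₖ/∂λⱼ = ∂fⱼ/∂λₖ`. -/
theorem spinless_f_symmetry (m n : ℕ) [NeZero m] (hn : 0 < n)
    (lam : Fin n → ℂ) (g : ZMod m → ℂ)
    (hlam : ∀ j, lam j ≠ 0)
    (hsep : ∀ a b : Fin n, a ≠ b → lam a ^ m ≠ lam b ^ m)
    (j k : Fin n) (hjk : j ≠ k) :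
    HasDerivAt (fun x : ℂ =>
        cConst m g ((m : ZMod m) - 1) / ((m : ℂ) * lam k) -
          gAbs m g / ((m : ℂ) * lam k) *
            (lam k ^ m / (x ^ m - lam k ^ m) +
              ∑ l ∈ (Finset.univ.erase k).erase j, lam k ^ m / (lam l ^ m - lam k ^ m)))
      (gAbs m g * (lam j * lam k) ^ (m - 1) / (lam j ^ m - lam k ^ m) ^ 2) (lam j) ∧
    deriv (fun x : ℂ =>
        cConst m g ((m : ZMod m) - 1) / ((m : ℂ) * lam k) -
          gAbs m g / ((m : ℂ) * lam k) *
            (lam k ^ m / (x ^ m - lam k ^ m) +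
              ∑ l ∈ (Finset.univ.erase k).erase j, lam k ^ m / (lam l ^ m - lam k ^ m)))
      (lam j) =
    deriv (fun x : ℂ =>
        cConst m g ((m : ZMod m) - 1) / ((m : ℂ) * lam j) -
          gAbs m g / ((m : ℂ) * lam j) *
            (lam j ^ m / (x ^ m - lam j ^ m) +
              ∑ l ∈ (Finset.univ.erase j).erase k, lam j ^ m / (lam l ^ m - lam j ^ m)))
      (lam k) :=
  spinless_f_symmetry_general m n lam g hlam hsep j k hjk
end
end
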